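/- The k-th antisymmetric tensor power map Λ^k from the m×m positive definite matrices to the ℓ×ℓ positive definite matrices (where ℓ = C(m,k)) is Lipschitz with respect to the Riemannian trace metric d(A,B) = ‖log(A^{-1/2} B A^{-1/2})‖₂, with Lipschitz constant √(k·C(m-1,k-1)); that is, d(Λ^k A, Λ^k B) ≤ √(k·C(m-1,k-1)) · d(A,B). -/

import Mathlib

open Matrix
open scoped ComplexOrder
noncomputable section
variable {n : Type*} [Fintype n] [DecidableEq n]

def opNorm (X : Matrix n n ℂ) : ℝ := ‖Matrix.toEuclideanCLM (𝕜 := ℂ) X‖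

def frobNorm (X : Matrix n n ℂ) : ℝ := Real.sqrt (∑ i, ∑ j, ‖X i j‖ ^ 2)

def matFun (f : ℝ → ℝ) (X : Matrix n n ℂ) : Matrix n n ℂ :=
  if hX : X.IsHermitian then
    (hX.eigenvectorUnitary : Matrix n n ℂ) * Matrix.diagonal (fun i => (f (hX.eigenvalues i) : ℂ)) *
      star (hX.eigenvectorUnitary : Matrix n n ℂ)
  else 0

def matLog (X : Matrix n n ℂ) : Matrix n n ℂ := matFun Real.log X
def matPow (X : Matrix n n ℂ) (t : ℝ) : Matrix n n ℂ := matFun (fun x => x ^ t) X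

def trMetric (A B : Matrix n n ℂ) : ℝ :=
  frobNorm (matLog (matPow A (-(1/2 : ℝ)) * B * matPow A (-(1/2 : ℝ))))

def exteriorPow {m : ℕ} (k : ℕ) (A : Matrix (Fin m) (Fin m) ℂ) :
    Matrix {s : Finset (Fin m) // s.card = k} {s : Finset (Fin m) // s.card = k} ℂ :=
  fun s t => (A.submatrix (fun i => (s.1.orderIsoOfFin s.2 i : Fin m))
    (fun j => (t.1.orderIsoOfFin t.2 j : Fin m))).det

/-!
Diagonalise `C = A^{-1/2} B A^{-1/2} = V diag(μ) V*` with `V` unitary. The matrix `Λ^k A` is the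
matrix of `⋀^k A` in the basis of wedges of standard basis vectors, so `Λ^k` is multiplicative,
commutes with `ᴴ` and sends `diag(d)` to `diag(∏_{i ∈ s} d i)`; hence it commutes with the
functional calculus of positive matrices and
`(Λ^k A)^{-1/2} Λ^k B (Λ^k A)^{-1/2} = Λ^k C = Λ^k V diag(∏_{i ∈ s} μ i) (Λ^k V)*`.
Therefore `d(A, B)² = ∑ i, (log μ i)²` and `d(Λ^k A, Λ^k B)² = ∑_{|s| = k} (∑_{i ∈ s} log μ i)²`.
By Cauchy–Schwarz each inner square is at most `k ∑_{i ∈ s} (log μ i)²`, and every `i` lies in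
`C(m-1, k-1)` of the sets `s`.
-/

section FunctionalCalculus

theorem diagonal_comp_mul_eq_mul_diagonal_comp {a b : n → ℝ} {M : Matrix n n ℂ}
    (h : diagonal (fun i => (a i : ℂ)) * M = M * diagonal (fun i => (b i : ℂ))) (f : ℝ → ℝ) :
    diagonal (fun i => (f (a i) : ℂ)) * M = M * diagonal (fun i => (f (b i) : ℂ)) := by
  ext i j
  have hij := congrFun (congrFun h i) j
  simp only [diagonal_mul, mul_diagonal] at hij ⊢
  by_cases hM : M i j = 0
  · simp [hM]
  · have hab : a i = b j := by exact_mod_cast mul_right_cancel₀ hM (hij.trans (mul_comm _ _))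
    rw [hab, mul_comm]

theorem unitary_conj_diagonal_comp_eq {U W : Matrix n n ℂ} (hU : U ∈ unitaryGroup n ℂ)
    (hW : W ∈ unitaryGroup n ℂ) {a b : n → ℝ}
    (h : W * diagonal (fun i => (a i : ℂ)) * star W =
      U * diagonal (fun i => (b i : ℂ)) * star U) (f : ℝ → ℝ) :
    W * diagonal (fun i => (f (a i) : ℂ)) * star W =
      U * diagonal (fun i => (f (b i) : ℂ)) * star U := by
  have hU₁ : star U * U = 1 := mem_unitaryGroup_iff'.mp hU
  have hU₂ : U * star U = 1 := mem_unitaryGroup_iff.mp hU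
  have hW₁ : star W * W = 1 := mem_unitaryGroup_iff'.mp hW
  have hW₂ : W * star W = 1 := mem_unitaryGroup_iff.mp hW
  have hM : diagonal (fun i => (a i : ℂ)) * (star W * U) =
      (star W * U) * diagonal (fun i => (b i : ℂ)) :=
    calc diagonal (fun i => (a i : ℂ)) * (star W * U)
        = star W * (W * diagonal (fun i => (a i : ℂ)) * star W) * U := by
          simp only [Matrix.mul_assoc, ← Matrix.mul_assoc (star W) W, hW₁, Matrix.one_mul]
      _ = (star W * U) * diagonal (fun i => (b i : ℂ)) := by
          rw [h]
          simp only [Matrix.mul_assoc, hU₁, Matrix.mul_one]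
  calc W * diagonal (fun i => (f (a i) : ℂ)) * star W
      = W * (diagonal (fun i => (f (a i) : ℂ)) * (star W * U)) * star U := by
        simp only [Matrix.mul_assoc, hU₂, Matrix.mul_one]
    _ = U * diagonal (fun i => (f (b i) : ℂ)) * star U := by
        rw [diagonal_comp_mul_eq_mul_diagonal_comp hM]
        simp only [← Matrix.mul_assoc, hW₂, Matrix.one_mul]

theorem isHermitian_mul_diagonal_mul_star (U : Matrix n n ℂ) (d : n → ℝ) :
    (U * diagonal (fun i => (d i : ℂ)) * star U).IsHermitian :=
  isHermitian_mul_mul_conjTranspose U (isHermitian_diagonal_iff.mpr fun _ => Complex.conj_ofReal _)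

theorem matFun_unitary_conj_diagonal (f : ℝ → ℝ) {U : Matrix n n ℂ}
    (hU : U ∈ unitaryGroup n ℂ) (d : n → ℝ) :
    matFun f (U * diagonal (fun i => (d i : ℂ)) * star U) =
      U * diagonal (fun i => (f (d i) : ℂ)) * star U := by
  have hX := isHermitian_mul_diagonal_mul_star U d
  rw [matFun, dif_pos hX]
  exact unitary_conj_diagonal_comp_eq hU (SetLike.coe_mem _) hX.spectral_theorem.symm f

theorem Matrix.PosSemidef.exists_unitary_conj_diagonal {A : Matrix n n ℂ} (hA : A.PosSemidef) :
    ∃ (U : Matrix n n ℂ) (d : n → ℝ), U ∈ unitaryGroup n ℂ ∧ (∀ i, 0 ≤ d i) ∧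
      A = U * diagonal (fun i => (d i : ℂ)) * star U :=
  ⟨_, _, SetLike.coe_mem _, hA.eigenvalues_nonneg, hA.1.spectral_theorem⟩

theorem Matrix.PosDef.exists_unitary_conj_diagonal {A : Matrix n n ℂ} (hA : A.PosDef) :
    ∃ (U : Matrix n n ℂ) (d : n → ℝ), U ∈ unitaryGroup n ℂ ∧ (∀ i, 0 < d i) ∧
      A = U * diagonal (fun i => (d i : ℂ)) * star U :=
  ⟨_, _, SetLike.coe_mem _, hA.eigenvalues_pos, hA.1.spectral_theorem⟩

theorem posDef_matPow {A : Matrix n n ℂ} (hA : A.PosDef) (t : ℝ) : (matPow A t).PosDef := by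
  obtain ⟨U, d, hU, hd, rfl⟩ := hA.exists_unitary_conj_diagonal
  rw [matPow, matFun_unitary_conj_diagonal _ hU,
    IsUnit.posDef_star_right_conjugate_iff (Unitary.isUnit_coe (U := ⟨U, hU⟩))]
  exact PosDef.diagonal fun i => Complex.zero_lt_real.mpr (Real.rpow_pos_of_pos (hd i) t)

omit [DecidableEq n] in
theorem frobNorm_eq_sqrt_re_trace (X : Matrix n n ℂ) : frobNorm X = √(Xᴴ * X).trace.re := by
  rw [frobNorm, trace, Complex.re_sum, Finset.sum_comm]
  congr 1
  refine Finset.sum_congr rfl fun j _ => ?_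
  simp [mul_apply, Complex.re_sum, ← Complex.normSq_eq_norm_sq, Complex.normSq_apply]

theorem frobNorm_unitary_conj_diagonal {U : Matrix n n ℂ} (hU : U ∈ unitaryGroup n ℂ)
    (r : n → ℝ) :
    frobNorm (U * diagonal (fun i => (r i : ℂ)) * star U) = √(∑ i, r i ^ 2) := by
  have hU₁ : star U * U = 1 := mem_unitaryGroup_iff'.mp hU
  rw [frobNorm_eq_sqrt_re_trace, (isHermitian_mul_diagonal_mul_star U r).eq]
  have hsq : (U * diagonal (fun i => (r i : ℂ)) * star U) *
      (U * diagonal (fun i => (r i : ℂ)) * star U) =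
        U * diagonal (fun i => ((r i ^ 2 : ℝ) : ℂ)) * star U := by
    simp only [Matrix.mul_assoc, ← Matrix.mul_assoc (star U) U, hU₁, Matrix.one_mul]
    simp only [← Matrix.mul_assoc, diagonal_mul_diagonal, sq, Complex.ofReal_mul]
  rw [hsq, trace_mul_cycle, hU₁, Matrix.one_mul, trace_diagonal, Complex.re_sum]
  simp only [Complex.ofReal_re]

theorem frobNorm_matLog_unitary_conj_diagonal {U : Matrix n n ℂ} (hU : U ∈ unitaryGroup n ℂ)
    (d : n → ℝ) :
    frobNorm (matLog (U * diagonal (fun i => (d i : ℂ)) * star U)) =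
      √(∑ i, Real.log (d i) ^ 2) := by
  rw [matLog, matFun_unitary_conj_diagonal _ hU, frobNorm_unitary_conj_diagonal hU]

end FunctionalCalculus

section ExteriorPower

variable {m k : ℕ}

theorem exteriorPow_eq_toMatrix (A : Matrix (Fin m) (Fin m) ℂ) :
    exteriorPow k A = LinearMap.toMatrix ((Pi.basisFun ℂ (Fin m)).exteriorPower k)
      ((Pi.basisFun ℂ (Fin m)).exteriorPower k) (exteriorPower.map k (toLin' A)) := by
  refine Matrix.ext fun (s t : Set.powersetCard (Fin m) k) => ?_
  rw [LinearMap.toMatrix_apply, exteriorPower.basis_apply, exteriorPower.basis_repr_apply,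
    exteriorPower.ιMulti_family, exteriorPower.map_apply_ιMulti,
    exteriorPower.ιMultiDual_apply_ιMulti, ← det_transpose]
  unfold exteriorPow
  congr 1
  ext i j
  simp [Set.powersetCard.ofFinEmbEquiv_symm_apply]

theorem exteriorPow_mul (A B : Matrix (Fin m) (Fin m) ℂ) :
    exteriorPow k (A * B) = exteriorPow k A * exteriorPow k B := by
  rw [exteriorPow_eq_toMatrix, exteriorPow_eq_toMatrix, exteriorPow_eq_toMatrix, toLin'_mul,
    exteriorPower.map_comp]
  exact LinearMap.toMatrix_comp _ _ _ _ _

theorem exteriorPow_one : exteriorPow k (1 : Matrix (Fin m) (Fin m) ℂ) = 1 := by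
  rw [exteriorPow_eq_toMatrix, toLin'_one, exteriorPower.map_id]
  exact LinearMap.toMatrix_id _

theorem exteriorPow_conjTranspose (A : Matrix (Fin m) (Fin m) ℂ) :
    exteriorPow k Aᴴ = (exteriorPow k A)ᴴ := by
  ext s t
  rw [conjTranspose_apply, exteriorPow, exteriorPow, ← conjTranspose_submatrix, det_conjTranspose]

theorem exteriorPow_diagonal (d : Fin m → ℂ) :
    exteriorPow k (diagonal d) = diagonal (fun s => ∏ x ∈ s.1, d x) := by
  ext s t
  by_cases hst : s = t
  · subst hst
    rw [exteriorPow, submatrix_diagonal d (fun i => (s.1.orderIsoOfFin s.2 i : Fin m))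
        (Subtype.val_injective.comp (s.1.orderIsoOfFin s.2).injective),
      det_diagonal, diagonal_apply_eq]
    exact (Fintype.prod_equiv (s.1.orderIsoOfFin s.2).toEquiv _ _ fun _ => rfl).trans
      (Finset.prod_coe_sort s.1 d)
  · obtain ⟨a, has, hat⟩ : ∃ a ∈ s.1, a ∉ t.1 := Finset.not_subset.mp fun hsub =>
      hst (Subtype.ext (Finset.eq_of_subset_of_card_le hsub (by rw [s.2, t.2])))
    rw [diagonal_apply_ne _ hst, exteriorPow]
    refine det_eq_zero_of_row_eq_zero ((s.1.orderIsoOfFin s.2).symm ⟨a, has⟩) fun j => ?_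
    simp only [submatrix_apply, OrderIso.apply_symm_apply]
    exact diagonal_apply_ne' d fun hja => hat (hja ▸ (t.1.orderIsoOfFin t.2 j).2)

theorem exteriorPow_mem_unitaryGroup {U : Matrix (Fin m) (Fin m) ℂ}
    (hU : U ∈ unitaryGroup (Fin m) ℂ) : exteriorPow k U ∈ unitaryGroup _ ℂ := by
  rw [mem_unitaryGroup_iff'] at hU ⊢
  rw [star_eq_conjTranspose, ← exteriorPow_conjTranspose, ← exteriorPow_mul,
    ← star_eq_conjTranspose, hU, exteriorPow_one]

theorem exteriorPow_mul_diagonal_mul_star (M : Matrix (Fin m) (Fin m) ℂ) (d : Fin m → ℂ) :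
    exteriorPow k (M * diagonal d * star M) =
      exteriorPow k M * diagonal (fun s => ∏ x ∈ s.1, d x) * star (exteriorPow k M) := by
  rw [exteriorPow_mul, exteriorPow_mul, exteriorPow_diagonal, star_eq_conjTranspose,
    exteriorPow_conjTranspose, star_eq_conjTranspose]

theorem matPow_exteriorPow {A : Matrix (Fin m) (Fin m) ℂ} (hA : A.PosSemidef) (t : ℝ) :
    matPow (exteriorPow k A) t = exteriorPow k (matPow A t) := by
  obtain ⟨U, d, hU, hd, rfl⟩ := hA.exists_unitary_conj_diagonal
  simp only [matPow, matFun_unitary_conj_diagonal _ hU, exteriorPow_mul_diagonal_mul_star,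
    ← Complex.ofReal_prod, matFun_unitary_conj_diagonal _ (exteriorPow_mem_unitaryGroup hU),
    Real.finsetProd_rpow _ _ fun i _ => hd i]

end ExteriorPower

section Counting

variable {α : Type*} [Fintype α] [DecidableEq α] {k : ℕ}

theorem sum_subsets_sum_mem {M : Type*} [AddCommMonoid M] (hk : 1 ≤ k) (g : α → M) :
    ∑ s : {s : Finset α // s.card = k}, ∑ x ∈ s.1, g x =
      (Fintype.card α - 1).choose (k - 1) • ∑ x, g x := by
  rw [← Finset.sum_subtype (Finset.univ.powersetCard k) (by simp) fun s => ∑ x ∈ s, g x,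
    Finset.sum_comm' (t' := Finset.univ)
      (s' := fun x => {s ∈ Finset.univ.powersetCard k | {x} ⊆ s}) (by simp [and_comm]),
    Finset.smul_sum]
  refine Finset.sum_congr rfl fun x _ => ?_
  rw [Finset.sum_const, Finset.card_filter_powersetCard_subset _ _ _ (Finset.subset_univ _)
    (by simpa using hk), Finset.card_singleton, Finset.card_univ]

theorem sum_subsets_sq_sum_mem_le (hk : 1 ≤ k) (y : α → ℝ) :
    ∑ s : {s : Finset α // s.card = k}, (∑ x ∈ s.1, y x) ^ 2 ≤
      k * (Fintype.card α - 1).choose (k - 1) * ∑ x, y x ^ 2 :=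
  calc ∑ s : {s : Finset α // s.card = k}, (∑ x ∈ s.1, y x) ^ 2
      ≤ ∑ s : {s : Finset α // s.card = k}, (k : ℝ) * ∑ x ∈ s.1, y x ^ 2 :=
        Finset.sum_le_sum fun s _ => by
          simpa only [s.2] using sq_sum_le_card_mul_sum_sq (s := s.1) (f := y)
    _ = k * (Fintype.card α - 1).choose (k - 1) * ∑ x, y x ^ 2 := by
        rw [← Finset.mul_sum, sum_subsets_sum_mem hk, nsmul_eq_mul, mul_assoc]

end Counting

theorem stmt3_general {m k : ℕ} (hk1 : 1 ≤ k)
    (A B : Matrix (Fin m) (Fin m) ℂ) (hA : A.PosDef) (hB : B.PosDef) :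
    trMetric (exteriorPow k A) (exteriorPow k B) ≤
      Real.sqrt (k * Nat.choose (m - 1) (k - 1)) * trMetric A B := by
  set S := matPow A (-(1/2 : ℝ))
  have hS := posDef_matPow hA (-(1/2 : ℝ))
  have hC : (S * B * S).PosDef := by
    simpa only [hS.1.eq] using hB.mul_mul_conjTranspose_same (vecMul_injective_of_isUnit hS.isUnit)
  obtain ⟨V, μ, hV, hμ, hC_eq⟩ := hC.exists_unitary_conj_diagonal
  have hΛC : exteriorPow k (S * B * S) = exteriorPow k V *
      diagonal (fun s => ((∏ x ∈ s.1, μ x : ℝ) : ℂ)) * star (exteriorPow k V) := by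
    simp only [hC_eq, exteriorPow_mul_diagonal_mul_star, Complex.ofReal_prod]
  have hd : trMetric A B = √(∑ i, Real.log (μ i) ^ 2) := by
    rw [trMetric, hC_eq, frobNorm_matLog_unitary_conj_diagonal hV]
  have hΛd : trMetric (exteriorPow k A) (exteriorPow k B) =
      √(∑ s : {s : Finset (Fin m) // s.card = k}, (∑ x ∈ s.1, Real.log (μ x)) ^ 2) := by
    rw [trMetric, matPow_exteriorPow hA.posSemidef, ← exteriorPow_mul, ← exteriorPow_mul, hΛC,
      frobNorm_matLog_unitary_conj_diagonal (exteriorPow_mem_unitaryGroup hV)]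
    simp only [Real.log_prod fun x _ => (hμ x).ne']
  rw [hΛd, hd, ← Real.sqrt_mul (by positivity)]
  refine Real.sqrt_le_sqrt ?_
  simpa using sum_subsets_sq_sum_mem_le hk1 fun x => Real.log (μ x)

theorem stmt3 {m k : ℕ} (hk1 : 1 ≤ k) (hk2 : k ≤ m)
    (A B : Matrix (Fin m) (Fin m) ℂ) (hA : A.PosDef) (hB : B.PosDef) :
    trMetric (exteriorPow k A) (exteriorPow k B) ≤
      Real.sqrt (k * Nat.choose (m - 1) (k - 1)) * trMetric A B :=
  stmt3_general hk1 A B hA hB
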